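/- Let f : ℂ → ℂ^N be holomorphic and nonvanishing, and f₁ = P₊f = ∂f − f (f†∂f)/(f†f) assumed nonvanishing. Then ∂̄f₁ = −(|f₁|²/|f|²) f, i.e. ∂(P₊f)† = −(|f₁|²/|f|²) f†. -/

import Mathlib

open Matrix Complex BigOperators

/-- Wirtinger derivative ∂ of a scalar function. -/
noncomputable def wd (g : ℂ → ℂ) (z : ℂ) : ℂ :=
  (fderiv ℝ g z 1 - Complex.I * fderiv ℝ g z Complex.I) / 2

/-- Wirtinger derivative ∂̄ of a scalar function. -/
noncomputable def wdbar (g : ℂ → ℂ) (z : ℂ) : ℂ :=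
  (fderiv ℝ g z 1 + Complex.I * fderiv ℝ g z Complex.I) / 2

/-- Componentwise ∂ of a vector-valued function. -/
noncomputable def wdv {N : ℕ} (f : ℂ → Fin N → ℂ) (z : ℂ) : Fin N → ℂ :=
  fun i => wd (fun w => f w i) z

/-- Componentwise ∂̄ of a vector-valued function. -/
noncomputable def wdbarv {N : ℕ} (f : ℂ → Fin N → ℂ) (z : ℂ) : Fin N → ℂ :=
  fun i => wdbar (fun w => f w i) z

/-- Entrywise ∂ of a matrix-valued function. -/
noncomputable def wdm {N : ℕ} (P : ℂ → Matrix (Fin N) (Fin N) ℂ) (z : ℂ) :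
    Matrix (Fin N) (Fin N) ℂ :=
  Matrix.of fun i j => wd (fun w => P w i j) z

/-- Entrywise ∂̄ of a matrix-valued function. -/
noncomputable def wdbarm {N : ℕ} (P : ℂ → Matrix (Fin N) (Fin N) ℂ) (z : ℂ) :
    Matrix (Fin N) (Fin N) ℂ :=
  Matrix.of fun i j => wdbar (fun w => P w i j) z

/-- The rank-1 projector P = (f ⊗ f†)/(f† f). -/
noncomputable def proj {N : ℕ} (f : Fin N → ℂ) : Matrix (Fin N) (Fin N) ℂ :=
  (star f ⬝ᵥ f)⁻¹ • Matrix.vecMulVec f (star f)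

/-- P₊(f, g) = g − f (f† g)/(f† f). -/
noncomputable def Pplus {N : ℕ} (f g : Fin N → ℂ) : Fin N → ℂ :=
  g - ((star f ⬝ᵥ g) / (star f ⬝ᵥ f)) • f

/-- fⱼ = P₊ʲ f, built from a map f : ℂ → ℂᴺ using the Wirtinger ∂. -/
noncomputable def Fseq {N : ℕ} (f : ℂ → Fin N → ℂ) : ℕ → ℂ → Fin N → ℂ
  | 0 => f
  | (j + 1) => fun z => Pplus (Fseq f j z) (wdv (Fseq f j) z)

/-! Since `f` and `∂f` are holomorphic, `∂̄f₁ = -∂̄(f†∂f / f†f) f`, and the Leibniz rule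
`∂̄(u†v) = (∂u)†v` for holomorphic `u`, `v` gives `∂̄(f†∂f) = |∂f|²` and `∂̄(f†f) = (∂f)†f`.
The coefficient is therefore `(|∂f|² |f|² - |f†∂f|²) / |f|⁴`, which is `|f₁|² / |f|²` by
Pythagoras for the orthogonal decomposition `∂f = f₁ + (f†∂f / f†f) f`. -/

open ComplexConjugate

section Wirtinger

variable {g h : ℂ → ℂ} {z : ℂ}

lemma fderiv_real_apply_of_differentiableAt (hg : DifferentiableAt ℂ g z) (v : ℂ) :
    fderiv ℝ g z v = v * deriv g z := by
  rw [hg.fderiv_restrictScalars ℝ, ContinuousLinearMap.coe_restrictScalars',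
    hg.hasDerivAt.hasFDerivAt.fderiv]
  simp

lemma wd_eq_deriv (hg : DifferentiableAt ℂ g z) : wd g z = deriv g z := by
  simp only [wd, fderiv_real_apply_of_differentiableAt hg]
  linear_combination (-deriv g z / 2) * I_sq

lemma wdbar_eq_zero_of_differentiableAt (hg : DifferentiableAt ℂ g z) : wdbar g z = 0 := by
  simp only [wdbar, fderiv_real_apply_of_differentiableAt hg]
  linear_combination (deriv g z / 2) * I_sq

lemma wdbar_conj (g : ℂ → ℂ) (z : ℂ) :
    wdbar (fun w => conj (g w)) z = conj (wd g z) := by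
  have hconj : fderiv ℝ (fun w => conj (g w)) z = _ := fderiv_star (f := g)
  simp [wdbar, wd, hconj, map_ofNat]

lemma wdbar_sub (hg : DifferentiableAt ℝ g z) (hh : DifferentiableAt ℝ h z) :
    wdbar (fun w => g w - h w) z = wdbar g z - wdbar h z := by
  simp only [wdbar, fderiv_fun_sub hg hh, _root_.sub_apply]
  ring

lemma wdbar_mul (hg : DifferentiableAt ℝ g z) (hh : DifferentiableAt ℝ h z) :
    wdbar (fun w => g w * h w) z = wdbar g z * h z + g z * wdbar h z := by
  simp only [wdbar, fderiv_fun_mul hg hh, _root_.add_apply, _root_.smul_apply, smul_eq_mul]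
  ring

lemma wdbar_inv (hh : DifferentiableAt ℝ h z) (h0 : h z ≠ 0) :
    wdbar (fun w => (h w)⁻¹) z = -wdbar h z / h z ^ 2 := by
  have hc : fderiv ℝ (fun w => (h w)⁻¹) z = (fderiv ℝ Inv.inv (h z)).comp (fderiv ℝ h z) :=
    fderiv_comp z (differentiableAt_inv h0) hh
  simp only [wdbar, hc, fderiv_inv' h0, ContinuousLinearMap.comp_apply,
    _root_.neg_apply, ContinuousLinearMap.mulLeftRight_apply]
  field_simp
  ring

lemma wdbar_div (hg : DifferentiableAt ℝ g z) (hh : DifferentiableAt ℝ h z) (h0 : h z ≠ 0) :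
    wdbar (fun w => g w / h w) z = (wdbar g z * h z - g z * wdbar h z) / h z ^ 2 := by
  simp only [div_eq_mul_inv]
  rw [wdbar_mul (h := fun w => (h w)⁻¹) hg (hh.inv h0), wdbar_inv hh h0]
  field_simp
  ring

lemma wdbar_sum {ι : Type*} (s : Finset ι) {F : ι → ℂ → ℂ}
    (hF : ∀ i ∈ s, DifferentiableAt ℝ (F i) z) :
    wdbar (fun w => ∑ i ∈ s, F i w) z = ∑ i ∈ s, wdbar (F i) z := by
  simp only [wdbar, fderiv_fun_sum hF, _root_.sum_apply, Finset.mul_sum,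
    ← Finset.sum_add_distrib, Finset.sum_div]

end Wirtinger

section Vector

variable {N : ℕ} {u v : ℂ → Fin N → ℂ} {c : ℂ → ℂ} {z : ℂ}

lemma wdbarv_eq_zero_of_differentiableAt (hu : ∀ i, DifferentiableAt ℂ (fun w => u w i) z) : wdbarv u z = 0 :=
  funext fun i => wdbar_eq_zero_of_differentiableAt (hu i)

lemma wdbarv_sub (hu : ∀ i, DifferentiableAt ℝ (fun w => u w i) z)
    (hv : ∀ i, DifferentiableAt ℝ (fun w => v w i) z) :
    wdbarv (fun w => u w - v w) z = wdbarv u z - wdbarv v z :=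
  funext fun i => wdbar_sub (hu i) (hv i)

lemma wdbarv_smul (hc : DifferentiableAt ℝ c z) (hu : ∀ i, DifferentiableAt ℝ (fun w => u w i) z) :
    wdbarv (fun w => c w • u w) z = wdbar c z • u z + c z • wdbarv u z :=
  funext fun i => wdbar_mul hc (hu i)

lemma differentiableAt_star_dotProduct (hu : ∀ i, DifferentiableAt ℝ (fun w => u w i) z)
    (hv : ∀ i, DifferentiableAt ℝ (fun w => v w i) z) :
    DifferentiableAt ℝ (fun w => star (u w) ⬝ᵥ v w) z := by
  simp only [dotProduct, Pi.star_apply]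
  exact DifferentiableAt.fun_sum fun i _ => (hu i).star.mul (hv i)

lemma wdbar_star_dotProduct (hu : ∀ i, DifferentiableAt ℝ (fun w => u w i) z)
    (hv : ∀ i, DifferentiableAt ℝ (fun w => v w i) z) :
    wdbar (fun w => star (u w) ⬝ᵥ v w) z =
      star (wdv u z) ⬝ᵥ v z + star (u z) ⬝ᵥ wdbarv v z := by
  simp only [dotProduct, Pi.star_apply]
  rw [wdbar_sum (F := fun i w => star (u w i) * v w i) _ fun i _ => (hu i).star.mul (hv i),
    ← Finset.sum_add_distrib]
  refine Finset.sum_congr rfl fun i _ => ?_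
  rw [wdbar_mul (hu i).star (hv i)]
  exact congrArg (· * v z i + _) (wdbar_conj _ z)

end Vector

lemma star_Pplus_dotProduct_Pplus {N : ℕ} (f g : Fin N → ℂ) :
    star (Pplus f g) ⬝ᵥ Pplus f g =
      star g ⬝ᵥ g - (star f ⬝ᵥ g) * (star g ⬝ᵥ f) / (star f ⬝ᵥ f) := by
  rcases eq_or_ne (star f ⬝ᵥ f) 0 with hf | hf
  · simp [Pplus, hf]
  have hfg : star (star f ⬝ᵥ g) = star g ⬝ᵥ f := by rw [← star_dotProduct]
  have hff : star (star f ⬝ᵥ f) = star f ⬝ᵥ f := by rw [← star_dotProduct]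
  simp only [Pplus, star_sub, star_smul, sub_dotProduct, dotProduct_sub, smul_dotProduct,
    dotProduct_smul, star_div₀, hfg, hff, smul_eq_mul]
  field_simp
  ring

lemma differentiable_wdv {N : ℕ} {f : ℂ → Fin N → ℂ} (hf : ∀ i, Differentiable ℂ (fun z => f z i))
    (i : Fin N) : Differentiable ℂ (fun z => wdv f z i) := by
  simpa only [wdv, wd_eq_deriv (hf i _)] using (hf i).deriv

theorem stmt_11_general {N : ℕ} (f : ℂ → Fin N → ℂ)
    (hhol : ∀ i, Differentiable ℂ (fun z => f z i))
    (hnv : ∀ z, f z ≠ 0) (ξ : ℂ) :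
    wdbarv (fun z => Pplus (f z) (wdv f z)) ξ =
      -((star (Pplus (f ξ) (wdv f ξ)) ⬝ᵥ Pplus (f ξ) (wdv f ξ)) /
          (star (f ξ) ⬝ᵥ f ξ)) • f ξ := by
  have hf' := differentiable_wdv hhol
  have hfR i : DifferentiableAt ℝ (fun z => f z i) ξ := (hhol i ξ).restrictScalars ℝ
  have hf'R i : DifferentiableAt ℝ (fun z => wdv f z i) ξ := (hf' i ξ).restrictScalars ℝ
  have hAR := differentiableAt_star_dotProduct hfR hfR
  have hBR := differentiableAt_star_dotProduct hfR hf'R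
  have hA : star (f ξ) ⬝ᵥ f ξ ≠ 0 := by
    open scoped ComplexOrder in exact dotProduct_star_self_eq_zero.not.mpr (hnv ξ)
  set c : ℂ → ℂ := fun z => (star (f z) ⬝ᵥ wdv f z) / (star (f z) ⬝ᵥ f z) with hc
  have hcR : DifferentiableAt ℝ c ξ := by
    simp only [hc, div_eq_mul_inv]
    exact hBR.mul (hAR.inv hA)
  have hwdbar_c : wdbar c ξ =
      (star (Pplus (f ξ) (wdv f ξ)) ⬝ᵥ Pplus (f ξ) (wdv f ξ)) / (star (f ξ) ⬝ᵥ f ξ) := by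
    rw [hc, wdbar_div hBR hAR hA, wdbar_star_dotProduct hfR hf'R, wdbar_star_dotProduct hfR hfR,
      wdbarv_eq_zero_of_differentiableAt fun i => hf' i ξ, wdbarv_eq_zero_of_differentiableAt fun i => hhol i ξ,
      dotProduct_zero, star_Pplus_dotProduct_Pplus]
    field_simp
    ring
  change wdbarv (fun z => wdv f z - c z • f z) ξ = _
  rw [wdbarv_sub (v := fun z => c z • f z) hf'R fun i => hcR.mul (hfR i),
    wdbarv_smul hcR hfR, hwdbar_c, wdbarv_eq_zero_of_differentiableAt fun i => hf' i ξ,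
    wdbarv_eq_zero_of_differentiableAt fun i => hhol i ξ]
  simp

/-- for holomorphic nonvanishing f with f₁ = P₊f nonvanishing,
∂̄f₁ = −(|f₁|²/|f|²) f. -/
theorem stmt_11 {N : ℕ} (f : ℂ → Fin N → ℂ)
    (hhol : ∀ i, Differentiable ℂ (fun z => f z i))
    (hnv : ∀ z, f z ≠ 0)
    (hnv1 : ∀ z, Pplus (f z) (wdv f z) ≠ 0) (ξ : ℂ) :
    wdbarv (fun z => Pplus (f z) (wdv f z)) ξ =
      -((star (Pplus (f ξ) (wdv f ξ)) ⬝ᵥ Pplus (f ξ) (wdv f ξ)) /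
          (star (f ξ) ⬝ᵥ f ξ)) • f ξ :=
  stmt_11_general f hhol hnv ξ
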